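/- Let d, T be positive integers, let L¹, …, L^N ∈ 𝕃, and let λ₁, …, λ_N > 0 with ∑_{i=1}^N λ_i = 1. Then the adapted barycenter problem decouples over columns: inf_{L ∈ 𝕃} ∑_{i=1}^N λ_i d_ABW(L, L^i)² = ∑_{t=1}^T inf_{C ∈ ℝ^{(T−t+1)d×d}} ∑_{i=1}^N λ_i min_{O ∈ O(d)} ‖C − L̃_t^i O‖_F², where L̃_t^i denotes the truncated t-th column of L^i. -/

import Mathlib

open Matrix

/-- Squared Frobenius norm of a real matrix: `‖A‖_F² = tr(Aᵀ A)`. -/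
noncomputable def frobSq {m n : Type*} [Fintype m] [Fintype n] (A : Matrix m n ℝ) : ℝ :=
  Matrix.trace (Aᵀ * A)

/-- `O ∈ O(d)`: a real orthogonal matrix. -/
def IsOrth {d : ℕ} (O : Matrix (Fin d) (Fin d) ℝ) : Prop :=
  O * Oᵀ = 1 ∧ Oᵀ * O = 1

/-- `L ∈ 𝕃`: block-lower triangular w.r.t. `T` blocks of size `d`
(indices are pairs `(i, t)` with `i : Fin d` the within-block index and `t : Fin T`
the block index); the block `L_{t,s}` vanishes for `t < s`. -/
def BlockLT {d T : ℕ} (L : Matrix (Fin d × Fin T) (Fin d × Fin T) ℝ) : Prop :=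
  ∀ p q : Fin d × Fin T, p.2 < q.2 → L p q = 0

/-- `O ∈ 𝕆`: block-diagonal with orthogonal `d × d` diagonal blocks. -/
def BlockOrth {d T : ℕ} (O : Matrix (Fin d × Fin T) (Fin d × Fin T) ℝ) : Prop :=
  ∃ f : Fin T → Matrix (Fin d) (Fin d) ℝ, (∀ t, IsOrth (f t)) ∧ O = Matrix.blockDiagonal f

/-- Truncated `t`-th column `L̃_t ∈ ℝ^{(T−t)d×d}` (0-based `t`): the rows of the `t`-th block
column of `L` from block row `t` on. -/
def truncCol {d T : ℕ} (L : Matrix (Fin d × Fin T) (Fin d × Fin T) ℝ) (t : Fin T) :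
    Matrix (Fin (T - t.val) × Fin d) (Fin d) ℝ :=
  fun p j => L (p.2, ⟨t.val + p.1.val, by have := p.1.isLt; omega⟩) (j, t)

/-- Column covariance `Σ̃_t^L = L̃_t L̃_tᵀ`. -/
noncomputable def colCov {d T : ℕ} (L : Matrix (Fin d × Fin T) (Fin d × Fin T) ℝ) (t : Fin T) :
    Matrix (Fin (T - t.val) × Fin d) (Fin (T - t.val) × Fin d) ℝ :=
  truncCol L t * (truncCol L t)ᵀ

/-- The positive semidefinite square root of a PSD matrix (junk value `0` otherwise). -/
noncomputable def sqrtPSD {n : Type*} [Fintype n] [DecidableEq n] (P : Matrix n n ℝ) :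
    Matrix n n ℝ :=
  by classical exact if h : P.PosSemidef then
    (h.1.eigenvectorUnitary : Matrix n n ℝ) * diagonal (Real.sqrt ∘ h.1.eigenvalues) *
      (star h.1.eigenvectorUnitary : Matrix n n ℝ) else 0

/-- The Bures–Wasserstein distance between (PSD) matrices. -/
noncomputable def dBW {n : Type*} [Fintype n] [DecidableEq n] (S1 S2 : Matrix n n ℝ) : ℝ :=
  Real.sqrt (Matrix.trace S1 + Matrix.trace S2 -
    2 * Matrix.trace (sqrtPSD (sqrtPSD S2 * S1 * sqrtPSD S2)))

/-- The squared adapted Bures–Wasserstein distance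
`d_ABW(L,M)² = min_{O ∈ 𝕆} ‖L − MO‖_F²` (the minimum over the compact group `𝕆` is attained,
so it equals the infimum). -/
noncomputable def dABWsq {d T : ℕ} (L M : Matrix (Fin d × Fin T) (Fin d × Fin T) ℝ) : ℝ :=
  sInf {x : ℝ | ∃ O, BlockOrth O ∧ x = frobSq (L - M * O)}

/- ## Auxiliary lemmas for stmt11 -/

lemma frobSq_entries' {m n : Type*} [Fintype m] [Fintype n] (A : Matrix m n ℝ) :
    frobSq A = ∑ q, ∑ p, (A p q)^2 := by
  unfold frobSq
  rw [Matrix.trace]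
  simp [Matrix.mul_apply, Matrix.diag, sq]

lemma frobSq_nonneg' {m n : Type*} [Fintype m] [Fintype n] (A : Matrix m n ℝ) :
    0 ≤ frobSq A := by
  rw [frobSq_entries']; positivity

lemma isOrth_one' {d : ℕ} : IsOrth (1 : Matrix (Fin d) (Fin d) ℝ) := by
  constructor <;> simp

instance instNonemptyOrth {d : ℕ} : Nonempty {Q : Matrix (Fin d) (Fin d) ℝ // IsOrth Q} :=
  ⟨⟨1, isOrth_one'⟩⟩

/-- Generic decoupling: the infimum of sums over independent choices is the sum of infima. -/
lemma sInf_sum_pi' {ι : Type*} [Fintype ι] {α : ι → Type*} [∀ t, Nonempty (α t)]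
    (f : ∀ t, α t → ℝ) (hf : ∀ t a, 0 ≤ f t a) :
    sInf {x : ℝ | ∃ c : (t : ι) → α t, x = ∑ t, f t (c t)}
      = ∑ t, sInf {y : ℝ | ∃ a : α t, y = f t a} := by
  classical
  set S : Set ℝ := {x : ℝ | ∃ c : (t : ι) → α t, x = ∑ t, f t (c t)} with hS
  have hSne : S.Nonempty := ⟨_, fun t => Classical.arbitrary (α t), rfl⟩
  have hStne : ∀ t : ι, ({y : ℝ | ∃ a : α t, y = f t a}).Nonempty :=
    fun t => ⟨_, Classical.arbitrary (α t), rfl⟩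
  have hStbd : ∀ t : ι, BddBelow {y : ℝ | ∃ a : α t, y = f t a} :=
    fun t => ⟨0, fun y ⟨a, ha⟩ => ha ▸ hf t a⟩
  apply le_antisymm
  · apply le_of_forall_pos_le_add
    intro ε hε
    set n : ℕ := Fintype.card ι
    set δ : ℝ := ε / (n + 1) with hδdef
    have hδ : 0 < δ := by positivity
    have hch : ∀ t : ι, ∃ a : α t, f t a < sInf {y : ℝ | ∃ a : α t, y = f t a} + δ := by
      intro t
      obtain ⟨y, hy, hlt⟩ := Real.lt_sInf_add_pos (hStne t) hδ
      obtain ⟨a, ha⟩ := hy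
      exact ⟨a, ha ▸ hlt⟩
    choose c hc using hch
    have hmem : (∑ t, f t (c t)) ∈ S := ⟨c, rfl⟩
    calc sInf S ≤ ∑ t, f t (c t) := csInf_le ⟨0, fun x ⟨c', hc'⟩ => by
            rw [hc']; exact Finset.sum_nonneg fun t _ => hf t (c' t)⟩ hmem
      _ ≤ ∑ t, (sInf {y : ℝ | ∃ a : α t, y = f t a} + δ) :=
            Finset.sum_le_sum fun t _ => (hc t).le
      _ = (∑ t, sInf {y : ℝ | ∃ a : α t, y = f t a}) + n * δ := by
            rw [Finset.sum_add_distrib, Finset.sum_const, Finset.card_univ]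
            ring
      _ ≤ (∑ t, sInf {y : ℝ | ∃ a : α t, y = f t a}) + ε := by
            have hn1 : (0:ℝ) < (n:ℝ) + 1 := by positivity
            have : (n : ℝ) * δ ≤ ε := by
              rw [hδdef, ← mul_div_assoc, div_le_iff₀ hn1]
              nlinarith [hε.le, (Nat.cast_nonneg n : (0:ℝ) ≤ n)]
            linarith [this]
  · apply le_csInf hSne
    rintro x ⟨c, rfl⟩
    exact Finset.sum_le_sum fun t _ => csInf_le (hStbd t) ⟨c t, rfl⟩

lemma sum_shift' {T : ℕ} (t : Fin T) (h : Fin T → ℝ)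
    (h0 : ∀ s : Fin T, s.val < t.val → h s = 0) :
    ∑ s, h s = ∑ u : Fin (T - t.val), h ⟨t.val + u.val, by have := u.isLt; omega⟩ := by
  classical
  set H : ℕ → ℝ := fun s => if hs : s < T then h ⟨s, hs⟩ else 0 with hH
  have e1 : ∑ s : Fin T, h s = ∑ s ∈ Finset.range T, H s := by
    rw [← Fin.sum_univ_eq_sum_range H T]
    exact Finset.sum_congr rfl fun s _ => by simp [hH, s.isLt]
  have e2 : ∑ s ∈ Finset.range T, H s = ∑ s ∈ Finset.Ico t.val T, H s := by
    refine (Finset.sum_subset ?_ ?_).symm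
    · intro x hx; simp only [Finset.mem_Ico] at hx; exact Finset.mem_range.mpr hx.2
    · intro x hx hx'
      simp only [Finset.mem_range] at hx
      simp only [Finset.mem_Ico, not_and, not_lt] at hx'
      have hxt : x < t.val := by by_contra hc; exact absurd (hx' (Nat.le_of_not_lt hc)) (by omega)
      simp only [hH, dif_pos hx]
      exact h0 ⟨x, hx⟩ hxt
  have e3 : ∑ s ∈ Finset.Ico t.val T, H s = ∑ u ∈ Finset.range (T - t.val), H (t.val + u) :=
    Finset.sum_Ico_eq_sum_range H t.val T
  have e4 : ∑ u ∈ Finset.range (T - t.val), H (t.val + u)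
      = ∑ u : Fin (T - t.val), H (t.val + u.val) :=
    (Fin.sum_univ_eq_sum_range (fun u => H (t.val + u)) (T - t.val)).symm
  rw [e1, e2, e3, e4]
  refine Finset.sum_congr rfl fun u _ => ?_
  have hu : t.val + u.val < T := by have := u.isLt; omega
  simp [hH, hu]

lemma mul_blockDiagonal_apply' {d T : ℕ} (M : Matrix (Fin d × Fin T) (Fin d × Fin T) ℝ)
    (f : Fin T → Matrix (Fin d) (Fin d) ℝ) (p : Fin d × Fin T) (j : Fin d) (t : Fin T) :
    (M * Matrix.blockDiagonal f) p (j, t) = ∑ i, M p (i, t) * f t i j := by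
  rw [Matrix.mul_apply, Fintype.sum_prod_type]
  simp [Matrix.blockDiagonal_apply, mul_ite, Finset.sum_ite_eq, Finset.sum_ite_eq']

/-- Column-wise decomposition of the Frobenius distance for block-lower-triangular matrices. -/
lemma colDecomp' {d T : ℕ} (K M : Matrix (Fin d × Fin T) (Fin d × Fin T) ℝ)
    (hK : BlockLT K) (hM : BlockLT M) (f : Fin T → Matrix (Fin d) (Fin d) ℝ) :
    frobSq (K - M * Matrix.blockDiagonal f)
      = ∑ t : Fin T, frobSq (truncCol K t - truncCol M t * f t) := by
  rw [frobSq_entries', Fintype.sum_prod_type]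
  rw [Finset.sum_comm]
  refine Finset.sum_congr rfl fun t _ => ?_
  rw [frobSq_entries']
  refine Finset.sum_congr rfl fun j _ => ?_
  rw [Fintype.sum_prod_type]
  rw [Finset.sum_comm]
  rw [sum_shift' t (fun s => ∑ k : Fin d, ((K - M * Matrix.blockDiagonal f) (k, s) (j, t))^2)
    (fun s hs => by
      refine Finset.sum_eq_zero fun k _ => ?_
      have h1 : K (k, s) (j, t) = 0 := hK _ _ hs
      have h2 : (M * Matrix.blockDiagonal f) (k, s) (j, t) = 0 := by
        rw [mul_blockDiagonal_apply']
        refine Finset.sum_eq_zero fun i _ => ?_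
        rw [hM (k, s) (i, t) hs, zero_mul]
      simp [Matrix.sub_apply, h1, h2])]
  rw [Fintype.sum_prod_type]
  refine Finset.sum_congr rfl fun u _ => Finset.sum_congr rfl fun k _ => ?_
  rw [Matrix.sub_apply, Matrix.sub_apply, mul_blockDiagonal_apply', Matrix.mul_apply]
  rfl

/-- The per-column orthogonal-matching cost. -/
noncomputable def gfun {d T : ℕ} (M : Matrix (Fin d × Fin T) (Fin d × Fin T) ℝ) (t : Fin T)
    (C : Matrix (Fin (T - t.val) × Fin d) (Fin d) ℝ) : ℝ :=
  sInf {y : ℝ | ∃ Q : Matrix (Fin d) (Fin d) ℝ, IsOrth Q ∧ y = frobSq (C - truncCol M t * Q)}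

lemma gfun_nonneg {d T : ℕ} (M : Matrix (Fin d × Fin T) (Fin d × Fin T) ℝ) (t : Fin T)
    (C : Matrix (Fin (T - t.val) × Fin d) (Fin d) ℝ) : 0 ≤ gfun M t C := by
  apply Real.sInf_nonneg
  rintro y ⟨Q, _, rfl⟩
  exact frobSq_nonneg' _

/-- Decomposition of the squared adapted BW distance over block columns. -/
lemma dABWsq_decomp {d T : ℕ} (K M : Matrix (Fin d × Fin T) (Fin d × Fin T) ℝ)
    (hK : BlockLT K) (hM : BlockLT M) :
    dABWsq K M = ∑ t : Fin T, gfun M t (truncCol K t) := by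
  classical
  unfold dABWsq
  have hset : {x : ℝ | ∃ O, BlockOrth O ∧ x = frobSq (K - M * O)}
      = {x : ℝ | ∃ c : (t : Fin T) → {Q : Matrix (Fin d) (Fin d) ℝ // IsOrth Q},
          x = ∑ t, frobSq (truncCol K t - truncCol M t * (c t).1)} := by
    ext x
    constructor
    · rintro ⟨O, ⟨f, hf, rfl⟩, rfl⟩
      exact ⟨fun t => ⟨f t, hf t⟩, colDecomp' K M hK hM f⟩
    · rintro ⟨c, rfl⟩
      exact ⟨Matrix.blockDiagonal (fun t => (c t).1),
        ⟨fun t => (c t).1, fun t => (c t).2, rfl⟩,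
        (colDecomp' K M hK hM (fun t => (c t).1)).symm⟩
  rw [hset]
  rw [sInf_sum_pi' (fun t (a : {Q : Matrix (Fin d) (Fin d) ℝ // IsOrth Q}) =>
      frobSq (truncCol K t - truncCol M t * a.1)) (fun t a => frobSq_nonneg' _)]
  refine Finset.sum_congr rfl fun t _ => ?_
  unfold gfun
  congr 1
  ext y
  constructor
  · rintro ⟨⟨Q, hQ⟩, rfl⟩; exact ⟨Q, hQ, rfl⟩
  · rintro ⟨Q, hQ, rfl⟩; exact ⟨⟨Q, hQ⟩, rfl⟩

/-- Assemble a block-lower-triangular matrix from prescribed truncated columns. -/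
def buildK {d T : ℕ} (c : (t : Fin T) → Matrix (Fin (T - t.val) × Fin d) (Fin d) ℝ) :
    Matrix (Fin d × Fin T) (Fin d × Fin T) ℝ :=
  fun p q => if h : q.2.val ≤ p.2.val then
      c q.2 (⟨p.2.val - q.2.val, by have := p.2.isLt; omega⟩, p.1) q.1 else 0

lemma buildK_blockLT {d T : ℕ} (c : (t : Fin T) → Matrix (Fin (T - t.val) × Fin d) (Fin d) ℝ) :
    BlockLT (buildK c) := by
  intro p q hpq
  unfold buildK
  rw [dif_neg]
  exact Nat.not_le.mpr hpq

lemma truncCol_buildK {d T : ℕ} (c : (t : Fin T) → Matrix (Fin (T - t.val) × Fin d) (Fin d) ℝ)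
    (t : Fin T) : truncCol (buildK c) t = c t := by
  funext p j
  show buildK c (p.2, ⟨t.val + p.1.val, _⟩) (j, t) = c t (p.1, p.2) j
  unfold buildK
  rw [dif_pos (by omega : t.val ≤ t.val + p.1.val)]
  refine congrArg (fun z => c t z j) (Prod.ext_iff.mpr ⟨Fin.ext ?_, rfl⟩)
  show t.val + p.1.val - t.val = p.1.val
  omega

/-- The adapted barycenter problem decouples over columns:
`inf_{L ∈ 𝕃} ∑ᵢ λᵢ d_ABW(L, Lⁱ)² = ∑_t inf_C ∑ᵢ λᵢ min_{O ∈ O(d)} ‖C − L̃ᵗⁱ O‖_F²`. -/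
theorem stmt11 (d T N : ℕ) (hd : 0 < d) (hT : 0 < T)
    (L : Fin N → Matrix (Fin d × Fin T) (Fin d × Fin T) ℝ) (hL : ∀ i, BlockLT (L i))
    (lam : Fin N → ℝ) (hlam : ∀ i, 0 < lam i) (hsum : ∑ i, lam i = 1) :
    sInf {x : ℝ | ∃ K, BlockLT K ∧ x = ∑ i, lam i * dABWsq K (L i)}
      = ∑ t : Fin T,
          sInf {x : ℝ | ∃ C : Matrix (Fin (T - t.val) × Fin d) (Fin d) ℝ,
            x = ∑ i, lam i *
              sInf {y : ℝ | ∃ Q : Matrix (Fin d) (Fin d) ℝ, IsOrth Q ∧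
                y = frobSq (C - truncCol (L i) t * Q)}} := by
  classical
  -- F t C is the weighted per-column cost
  set F : (t : Fin T) → Matrix (Fin (T - t.val) × Fin d) (Fin d) ℝ → ℝ :=
    fun t C => ∑ i, lam i * gfun (L i) t C with hF
  have hFnn : ∀ t C, 0 ≤ F t C := fun t C =>
    Finset.sum_nonneg fun i _ => mul_nonneg (hlam i).le (gfun_nonneg _ _ _)
  have hsumF : ∀ K, BlockLT K → ∑ i, lam i * dABWsq K (L i) = ∑ t, F t (truncCol K t) := by
    intro K hK
    have : ∀ i, lam i * dABWsq K (L i) = ∑ t, lam i * gfun (L i) t (truncCol K t) := by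
      intro i
      rw [dABWsq_decomp K (L i) hK (hL i), Finset.mul_sum]
    rw [Finset.sum_congr rfl fun i _ => this i, Finset.sum_comm]
  have hset : {x : ℝ | ∃ K, BlockLT K ∧ x = ∑ i, lam i * dABWsq K (L i)}
      = {x : ℝ | ∃ c : (t : Fin T) → Matrix (Fin (T - t.val) × Fin d) (Fin d) ℝ,
          x = ∑ t, F t (c t)} := by
    ext x
    constructor
    · rintro ⟨K, hK, rfl⟩
      exact ⟨fun t => truncCol K t, hsumF K hK⟩
    · rintro ⟨c, rfl⟩
      refine ⟨buildK c, buildK_blockLT c, ?_⟩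
      rw [hsumF (buildK c) (buildK_blockLT c)]
      exact Finset.sum_congr rfl fun t _ => by rw [truncCol_buildK]
  rw [hset, sInf_sum_pi' F hFnn]
  exact Finset.sum_congr rfl fun t _ => rfl
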